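/- Let u(t) be a time-differentiable family of periodic grid functions solving the semi-discrete scheme (u_i)'(t) = −(1/3)[u_i(t)(D₀u(t))_i + (D₀(u(t)²))_i] − (D₋D₊²u(t))_i + (D₊³D₋²u(t))_i for all i and all t ∈ [0,T]. Then for every t ∈ [0,T]: ‖u(t)‖_h² + (Δx/2) ∫₀ᵗ (‖D₊D₋u(τ)‖_h² + ‖D₋D₊²u(τ)‖_h²) dτ ≤ ‖u(0)‖_h²; in particular ‖u(t)‖_h ≤ ‖u(0)‖_h for all t. -/

import Mathlib

/-- Forward difference operator `(D₊u)_i = (u_{i+1} − u_i)/h`. -/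
noncomputable def Dp (h : ℝ) (u : ℤ → ℝ) : ℤ → ℝ := fun i => (u (i + 1) - u i) / h

/-- Backward difference operator `(D₋u)_i = (u_i − u_{i−1})/h`. -/
noncomputable def Dm (h : ℝ) (u : ℤ → ℝ) : ℤ → ℝ := fun i => (u i - u (i - 1)) / h

/-- Central difference operator `(D₀u)_i = (u_{i+1} − u_{i−1})/(2h)`. -/
noncomputable def D0 (h : ℝ) (u : ℤ → ℝ) : ℤ → ℝ := fun i => (u (i + 1) - u (i - 1)) / (2 * h)

/-- Discrete inner product `(f,g)_h = h Σ_{i=1}^N f_i g_i`. -/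
noncomputable def iph (N : ℕ) (h : ℝ) (f g : ℤ → ℝ) : ℝ :=
  h * ∑ i ∈ Finset.Icc (1 : ℤ) (N : ℤ), f i * g i

/-- Discrete squared norm `‖f‖_h² = h Σ_{i=1}^N f_i²`. -/
noncomputable def nh2 (N : ℕ) (h : ℝ) (f : ℤ → ℝ) : ℝ :=
  h * ∑ i ∈ Finset.Icc (1 : ℤ) (N : ℤ), (f i) ^ 2

/-- Discrete norm `‖f‖_h`. -/
noncomputable def normh (N : ℕ) (h : ℝ) (f : ℤ → ℝ) : ℝ := Real.sqrt (nh2 N h f)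

/-- A periodic grid function with period `N`: `u_{i+N} = u_i` for all `i`. -/
def PeriodicGrid (N : ℕ) (u : ℤ → ℝ) : Prop := ∀ i : ℤ, u (i + N) = u i

/-!
Pair the scheme with `u` in `(·,·)_h`. On a periodic grid every sum of differences
`F_{i+1} - F_i` over a period vanishes. Hence the nonlinear term is skew,
`(v, v D₀v + D₀(v²))_h = 0`, its summand being half the difference of the flux
`v_{i-1} v_i (v_{i-1} + v_i)`; and summation by parts together with
`(w, D₊w)_h = -(h/2) ‖D₊w‖_h²` turns the third- and fifth-order terms into
`-(h/2) ‖D₊D₋u‖_h²` and `-(h/2) ‖D₋D₊²u‖_h²`, the numerical dissipation of the one-sided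
differences. So `d/dt ‖u‖_h² = -h (‖D₊D₋u‖_h² + ‖D₋D₊²u‖_h²)`, which integrates to the estimate
with a factor `1/2` to spare.
-/

open Finset MeasureTheory

namespace PeriodicGrid

variable {N : ℕ} {f g : ℤ → ℝ}

theorem periodic (hf : PeriodicGrid N f) : Function.Periodic f N := hf

theorem add_const (hf : PeriodicGrid N f) (k : ℤ) : PeriodicGrid N (fun i => f (i + k)) :=
  hf.periodic.add_const k

theorem sub_const (hf : PeriodicGrid N f) (k : ℤ) : PeriodicGrid N (fun i => f (i - k)) :=
  hf.periodic.sub_const k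

theorem comp (hf : PeriodicGrid N f) (φ : ℝ → ℝ) : PeriodicGrid N (fun i => φ (f i)) :=
  hf.periodic.comp φ

theorem add (hf : PeriodicGrid N f) (hg : PeriodicGrid N g) :
    PeriodicGrid N (fun i => f i + g i) :=
  hf.periodic.add hg.periodic

theorem mul (hf : PeriodicGrid N f) (hg : PeriodicGrid N g) :
    PeriodicGrid N (fun i => f i * g i) :=
  hf.periodic.mul hg.periodic

theorem dp (hf : PeriodicGrid N f) (h : ℝ) : PeriodicGrid N (Dp h f) :=
  ((hf.add_const 1).periodic.sub hf.periodic).comp (· / h)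

theorem dm (hf : PeriodicGrid N f) (h : ℝ) : PeriodicGrid N (Dm h f) :=
  (hf.periodic.sub (hf.sub_const 1).periodic).comp (· / h)

theorem sum_Icc_comp_add_one (hf : PeriodicGrid N f) :
    ∑ i ∈ Icc (1 : ℤ) N, f (i + 1) = ∑ i ∈ Icc (1 : ℤ) N, f i := by
  rcases N.eq_zero_or_pos with rfl | hN
  · simp
  have hN' : (1 : ℤ) ≤ N := by exact_mod_cast hN
  have hmap := sum_map (Icc (1 : ℤ) N) (addRightEmbedding 1) f
  rw [map_add_right_Icc] at hmap
  refine hmap.symm.trans ?_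
  rw [← insert_Icc_right_eq_Icc_add_one (by omega), ← insert_Icc_add_one_left_eq_Icc hN',
    sum_insert (by simp), sum_insert (by simp), add_comm (N : ℤ), hf 1]

theorem sum_Icc_sub_comp_add_one (hf : PeriodicGrid N f) :
    ∑ i ∈ Icc (1 : ℤ) N, (f (i + 1) - f i) = 0 := by
  rw [sum_sub_distrib, hf.sum_Icc_comp_add_one, sub_self]

theorem nh2_comp_add_one (hf : PeriodicGrid N f) (h : ℝ) :
    nh2 N h (fun i => f (i + 1)) = nh2 N h f := by
  rw [nh2, nh2, (hf.comp (· ^ 2)).sum_Icc_comp_add_one]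

end PeriodicGrid

theorem iph_comm (N : ℕ) (h : ℝ) (f g : ℤ → ℝ) : iph N h f g = iph N h g f := by
  simp only [iph, mul_comm (f _)]

section SummationByParts

variable {N : ℕ} {h : ℝ} {f g v : ℤ → ℝ}

theorem iph_Dp_left (hf : PeriodicGrid N f) (hg : PeriodicGrid N g) :
    iph N h (Dp h f) g = -iph N h f (Dm h g) := by
  rcases eq_or_ne h 0 with rfl | hh
  · simp [iph]
  have htel : iph N h (Dp h f) g + iph N h f (Dm h g)
      = ∑ i ∈ Icc (1 : ℤ) N, (f (i + 1) * g (i + 1 - 1) - f i * g (i - 1)) := by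
    simp only [iph, Dp, Dm, ← mul_add, ← sum_add_distrib, mul_sum, add_sub_cancel_right]
    exact sum_congr rfl fun i _ => by field_simp; ring
  rw [(hf.mul (hg.sub_const 1)).sum_Icc_sub_comp_add_one] at htel
  linarith

theorem iph_Dp_right (hf : PeriodicGrid N f) (hg : PeriodicGrid N g) :
    iph N h f (Dp h g) = -iph N h (Dm h f) g := by
  rw [iph_comm, iph_Dp_left hg hf, iph_comm]

theorem iph_self_Dp (hv : PeriodicGrid N v) :
    iph N h v (Dp h v) = -(h / 2) * nh2 N h (Dp h v) := by
  rcases eq_or_ne h 0 with rfl | hh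
  · simp [iph, nh2]
  have htel : iph N h v (Dp h v) + (h / 2) * nh2 N h (Dp h v)
      = (1 / 2) * ∑ i ∈ Icc (1 : ℤ) N, (v (i + 1) ^ 2 - v i ^ 2) := by
    simp only [iph, nh2, Dp, mul_sum, ← sum_add_distrib]
    exact sum_congr rfl fun i _ => by field_simp; ring
  rw [(hv.comp (· ^ 2)).sum_Icc_sub_comp_add_one] at htel
  linarith

theorem iph_burgers_eq_zero (hv : PeriodicGrid N v) :
    iph N h v (fun i => v i * D0 h v i + D0 h (fun j => v j ^ 2) i) = 0 := by
  rcases eq_or_ne h 0 with rfl | hh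
  · simp [iph]
  have hflux : PeriodicGrid N (fun i => v (i - 1) * v i * (v (i - 1) + v i)) :=
    ((hv.sub_const 1).mul hv).mul ((hv.sub_const 1).add hv)
  calc iph N h v (fun i => v i * D0 h v i + D0 h (fun j => v j ^ 2) i)
      = (1 / 2) * ∑ i ∈ Icc (1 : ℤ) N, (v (i + 1 - 1) * v (i + 1) * (v (i + 1 - 1) + v (i + 1))
          - v (i - 1) * v i * (v (i - 1) + v i)) := by
        simp only [iph, D0, mul_sum, add_sub_cancel_right]
        exact sum_congr rfl fun i _ => by field_simp; ring
    _ = 0 := by rw [hflux.sum_Icc_sub_comp_add_one, mul_zero]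

end SummationByParts

noncomputable def semidiscreteRHS (h : ℝ) (v : ℤ → ℝ) : ℤ → ℝ := fun i =>
  -(1 / 3) * (v i * D0 h v i + D0 h (fun j => v j ^ 2) i)
    - Dm h (Dp h (Dp h v)) i + Dp h (Dp h (Dp h (Dm h (Dm h v)))) i

noncomputable def dissipation (N : ℕ) (h : ℝ) (v : ℤ → ℝ) : ℝ :=
  nh2 N h (Dp h (Dm h v)) + nh2 N h (Dm h (Dp h (Dp h v)))

section EnergyIdentity

variable {N : ℕ} {h : ℝ} {v : ℤ → ℝ}

theorem Dp_Dp_eq_shift_Dp_Dm (h : ℝ) (v : ℤ → ℝ) :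
    Dp h (Dp h v) = fun i => Dp h (Dm h v) (i + 1) := by
  funext i
  simp only [Dp, Dm, add_sub_cancel_right]

theorem Dm_Dp_Dp_eq_shift_Dp_Dm_Dm (h : ℝ) (v : ℤ → ℝ) :
    Dm h (Dp h (Dp h v)) = fun i => Dp h (Dm h (Dm h v)) (i + 1) := by
  funext i
  simp only [Dp, Dm, add_sub_cancel_right, sub_add_cancel]

theorem iph_semidiscreteRHS (hv : PeriodicGrid N v) :
    iph N h v (semidiscreteRHS h v) = -(h / 2) * dissipation N h v := by
  have hsplit : iph N h v (semidiscreteRHS h v)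
      = -(1 / 3) * iph N h v (fun i => v i * D0 h v i + D0 h (fun j => v j ^ 2) i)
        - iph N h v (Dm h (Dp h (Dp h v)))
        + iph N h v (Dp h (Dp h (Dp h (Dm h (Dm h v))))) := by
    simp only [iph, semidiscreteRHS, mul_sum, ← sum_sub_distrib, ← sum_add_distrib]
    exact sum_congr rfl fun i _ => by ring
  have hdisp : iph N h v (Dm h (Dp h (Dp h v))) = (h / 2) * nh2 N h (Dp h (Dm h v)) := by
    rw [← neg_neg (iph N h v _), ← iph_Dp_left hv ((hv.dp h).dp h), iph_self_Dp (hv.dp h),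
      Dp_Dp_eq_shift_Dp_Dm, ((hv.dm h).dp h).nh2_comp_add_one]
    ring
  have hdiss : iph N h v (Dp h (Dp h (Dp h (Dm h (Dm h v)))))
      = -(h / 2) * nh2 N h (Dm h (Dp h (Dp h v))) := by
    have hw := (hv.dm h).dm h
    rw [iph_Dp_right hv ((hw.dp h).dp h), iph_Dp_right (hv.dm h) (hw.dp h), neg_neg,
      iph_self_Dp hw, Dm_Dp_Dp_eq_shift_Dp_Dm_Dm, (hw.dp h).nh2_comp_add_one]
  rw [hsplit, iph_burgers_eq_zero hv, hdisp, hdiss, dissipation]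
  ring

theorem mul_dissipation_nonneg : 0 ≤ h * dissipation N h v := by
  rw [dissipation, nh2, nh2, ← mul_add, ← mul_assoc]
  exact mul_nonneg (mul_self_nonneg h) (by positivity)

end EnergyIdentity

@[fun_prop]
theorem continuous_Dp (h : ℝ) : Continuous (Dp h) :=
  continuous_pi fun i => by unfold Dp; fun_prop

@[fun_prop]
theorem continuous_Dm (h : ℝ) : Continuous (Dm h) :=
  continuous_pi fun i => by unfold Dm; fun_prop

@[fun_prop]
theorem continuous_nh2 (N : ℕ) (h : ℝ) : Continuous (nh2 N h) := by
  unfold nh2; fun_prop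

theorem continuous_dissipation (N : ℕ) (h : ℝ) : Continuous (dissipation N h) := by
  unfold dissipation; fun_prop

theorem hasDerivAt_nh2 {N : ℕ} {h : ℝ} {u : ℝ → ℤ → ℝ} {u' : ℤ → ℝ} {t : ℝ}
    (hu : ∀ i, HasDerivAt (fun s => u s i) (u' i) t) :
    HasDerivAt (fun s => nh2 N h (u s)) (2 * iph N h (u t) u') t := by
  refine ((HasDerivAt.fun_sum (u := Icc (1 : ℤ) N) fun i _ => (hu i).fun_pow 2).const_mul h
    ).congr_deriv ?_
  simp only [iph, mul_sum]
  exact sum_congr rfl fun i _ => by push_cast; ring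

theorem nh2_eq_sub_integral_dissipation {N : ℕ} {h : ℝ} {u : ℝ → ℤ → ℝ} {t : ℝ} (ht : 0 ≤ t)
    (hper : ∀ τ ∈ Set.Icc 0 t, PeriodicGrid N (u τ))
    (hu : ∀ i, ∀ τ ∈ Set.Icc 0 t, HasDerivAt (fun s => u s i) (semidiscreteRHS h (u τ) i) τ) :
    nh2 N h (u t) = nh2 N h (u 0) - ∫ τ in 0..t, h * dissipation N h (u τ) := by
  rw [← Set.uIcc_of_le ht] at hper hu
  have hderiv : ∀ τ ∈ Set.uIcc 0 t,
      HasDerivAt (fun s => nh2 N h (u s)) (-(h * dissipation N h (u τ))) τ := fun τ hτ => by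
    convert hasDerivAt_nh2 fun i => hu i τ hτ using 1
    rw [iph_semidiscreteRHS (hper τ hτ)]
    ring
  have hcont : ContinuousOn u (Set.uIcc 0 t) :=
    continuousOn_pi.2 fun i τ hτ => (hu i τ hτ).continuousAt.continuousWithinAt
  have hint : IntervalIntegrable (fun τ => -(h * dissipation N h (u τ))) volume 0 t :=
    (((continuous_dissipation N h).comp_continuousOn hcont).const_smul h).neg.intervalIntegrable
  have hftc := intervalIntegral.integral_eq_sub_of_hasDerivAt hderiv hint
  rw [intervalIntegral.integral_neg] at hftc
  linarith

theorem semidiscrete_L2_stability_general (N : ℕ) (Δx : ℝ)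
    (T : ℝ) (u : ℝ → ℤ → ℝ)
    (hper : ∀ t : ℝ, PeriodicGrid N (u t))
    (heq : ∀ i : ℤ, ∀ t ∈ Set.Icc (0 : ℝ) T,
      HasDerivAt (fun s => u s i)
        (-(1/3) * (u t i * D0 Δx (u t) i + D0 Δx (fun j => (u t j) ^ 2) i)
          - Dm Δx (Dp Δx (Dp Δx (u t))) i
          + Dp Δx (Dp Δx (Dp Δx (Dm Δx (Dm Δx (u t))))) i) t) :
    ∀ t ∈ Set.Icc (0 : ℝ) T,
      nh2 N Δx (u t)
        + (Δx / 2) * ∫ τ in (0:ℝ)..t,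
            (nh2 N Δx (Dp Δx (Dm Δx (u τ))) + nh2 N Δx (Dm Δx (Dp Δx (Dp Δx (u τ)))))
        ≤ nh2 N Δx (u 0)
      ∧ normh N Δx (u t) ≤ normh N Δx (u 0) := by
  intro t ht
  have henergy := nh2_eq_sub_integral_dissipation (h := Δx) ht.1 (fun τ _ => hper τ)
    fun i τ hτ => heq i τ ⟨hτ.1, hτ.2.trans ht.2⟩
  have hloss : 0 ≤ ∫ τ in (0:ℝ)..t, Δx * dissipation N Δx (u τ) :=
    intervalIntegral.integral_nonneg ht.1 fun τ _ => mul_dissipation_nonneg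
  have hhalf : (Δx / 2) * ∫ τ in (0:ℝ)..t, dissipation N Δx (u τ)
      = (1 / 2) * ∫ τ in (0:ℝ)..t, Δx * dissipation N Δx (u τ) := by
    rw [intervalIntegral.integral_const_mul]; ring
  refine ⟨?_, Real.sqrt_le_sqrt (by linarith)⟩
  change nh2 N Δx (u t) + (Δx / 2) * ∫ τ in (0:ℝ)..t, dissipation N Δx (u τ) ≤ _
  linarith

/-- Paper's estimate (2.8) in Theorem 2.4: if `t ↦ u(t)` is a time-differentiable family of
periodic grid functions solving the semi-discrete scheme
`(u_i)' = −(1/3)[u_i (D₀u)_i + (D₀u²)_i] − (D₋D₊²u)_i + (D₊³D₋²u)_i` on `[0,T]`, then for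
every `t ∈ [0,T]`,
`‖u(t)‖_h² + (Δx/2) ∫₀ᵗ (‖D₊D₋u(τ)‖_h² + ‖D₋D₊²u(τ)‖_h²) dτ ≤ ‖u(0)‖_h²`;
in particular `‖u(t)‖_h ≤ ‖u(0)‖_h`. Here `Δx = 1/N`. -/
theorem semidiscrete_L2_stability (N : ℕ) (hN : 1 ≤ N) (Δx : ℝ) (hΔx : Δx = 1 / N)
    (T : ℝ) (hT : 0 ≤ T) (u : ℝ → ℤ → ℝ)
    (hper : ∀ t : ℝ, PeriodicGrid N (u t))
    (heq : ∀ i : ℤ, ∀ t ∈ Set.Icc (0 : ℝ) T,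
      HasDerivAt (fun s => u s i)
        (-(1/3) * (u t i * D0 Δx (u t) i + D0 Δx (fun j => (u t j) ^ 2) i)
          - Dm Δx (Dp Δx (Dp Δx (u t))) i
          + Dp Δx (Dp Δx (Dp Δx (Dm Δx (Dm Δx (u t))))) i) t) :
    ∀ t ∈ Set.Icc (0 : ℝ) T,
      nh2 N Δx (u t)
        + (Δx / 2) * ∫ τ in (0:ℝ)..t,
            (nh2 N Δx (Dp Δx (Dm Δx (u τ))) + nh2 N Δx (Dm Δx (Dp Δx (Dp Δx (u τ)))))
        ≤ nh2 N Δx (u 0)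
      ∧ normh N Δx (u t) ≤ normh N Δx (u 0) :=
  semidiscrete_L2_stability_general N Δx T u hper heq
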